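/- Let p ≥ 2, β > 0, h > 0 be fixed, and for each p let q_p ∈ [0,1] be the unique solution of q = E[tanh²(β(p/2)^{1/2} q^{(p−1)/2} Y + h)] (assuming condition (H) holds for each p so that the solution exists uniquely). Then lim_{p→∞} q_p = tanh²(h). -/

import Mathlib

/-
Write `t = tanh² h` and `G(s) = E[tanh²(sY + h)]`. Since `tanh²` is 2-Lipschitz,
`|G(s) - t| ≤ 2|s| E|Y|`. Fix `a ∈ (t, 1)`. On `[0, a]` the fixed-point map
`x ↦ G(β √(p/2) x^((p-1)/2))` stays within `O(√p a^((p-1)/2)) → 0` of `t`, so for large `p`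
it maps `a` to at most `a`, while it maps `0` to `t ≥ 0`. The intermediate value theorem gives
a fixed point in `[0, a]`, which by uniqueness is `q_p`; the same bound at `q_p ≤ a` then gives
`|q_p - t| = O(√p a^((p-1)/2))`.
-/

open MeasureTheory ProbabilityTheory Real Filter Topology Set

theorem Real.hasDerivAt_tanh (x : ℝ) : HasDerivAt tanh (1 / cosh x ^ 2) x := by
  rw [show tanh = sinh / cosh from funext tanh_eq_sinh_div_cosh]
  refine ((hasDerivAt_sinh x).div (hasDerivAt_cosh x) (cosh_pos x).ne').congr_deriv ?_
  rw [← cosh_sq_sub_sinh_sq x]; ring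

theorem Real.lipschitzWith_tanh : LipschitzWith 1 tanh := by
  refine lipschitzWith_of_nnnorm_deriv_le (fun x => (hasDerivAt_tanh x).differentiableAt)
    fun x => ?_
  rw [(hasDerivAt_tanh x).deriv, ← NNReal.coe_le_coe, coe_nnnorm, NNReal.coe_one,
    norm_of_nonneg (by positivity), div_le_one (by positivity)]
  nlinarith [one_le_cosh x]

@[fun_prop]
theorem Real.continuous_tanh : Continuous tanh :=
  lipschitzWith_tanh.continuous

theorem Real.abs_tanh_sq_sub_tanh_sq_le (u v : ℝ) :
    |tanh u ^ 2 - tanh v ^ 2| ≤ 2 * |u - v| := by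
  have hlip : |tanh u - tanh v| ≤ |u - v| := by
    simpa [dist_eq] using lipschitzWith_tanh.dist_le_mul u v
  have hsum : |tanh u + tanh v| ≤ 2 :=
    (abs_add_le _ _).trans (by linarith [(abs_tanh_lt_one u).le, (abs_tanh_lt_one v).le])
  calc |tanh u ^ 2 - tanh v ^ 2| = |tanh u - tanh v| * |tanh u + tanh v| := by
        rw [← abs_mul]; ring_nf
    _ ≤ |u - v| * 2 := mul_le_mul hlip hsum (abs_nonneg _) (abs_nonneg _)
    _ = 2 * |u - v| := mul_comm _ _

theorem Real.norm_tanh_sq_le_one (x : ℝ) : ‖tanh x ^ 2‖ ≤ 1 := by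
  rw [norm_of_nonneg (sq_nonneg _)]
  exact (tanh_sq_lt_one x).le

theorem integrable_abs_gaussianReal (μ : ℝ) (v : NNReal) :
    Integrable (fun y => |y|) (gaussianReal μ v) :=
  (memLp_one_iff_integrable.1 (memLp_id_gaussianReal 1)).abs

theorem exists_fixedPoint_mem_Icc {f : ℝ → ℝ} {a : ℝ} (ha : 0 ≤ a)
    (hf : ContinuousOn f (Icc 0 a)) (h0 : 0 ≤ f 0) (hfa : f a ≤ a) :
    ∃ x ∈ Icc 0 a, f x = x := by
  obtain ⟨x, hx, hfx⟩ := intermediate_value_Icc' ha (hf.sub continuousOn_id)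
    (show (0 : ℝ) ∈ Icc (f a - a) (f 0 - 0) from ⟨by linarith, by linarith⟩)
  exact ⟨x, hx, sub_eq_zero.1 hfx⟩

theorem tendsto_sqrt_mul_rpow_atTop {a : ℝ} (ha0 : 0 < a) (ha1 : a < 1) :
    Tendsto (fun p : ℕ => √((p : ℝ) / 2) * a ^ (((p : ℝ) - 1) / 2)) atTop (𝓝 0) := by
  have hrpow (p : ℕ) : a ^ (((p : ℝ) - 1) / 2) = √a ^ p / √a := by
    rw [sqrt_eq_rpow, ← rpow_natCast, ← rpow_mul ha0.le, ← rpow_sub ha0]; ring_nf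
  have hle (p : ℕ) : √((p : ℝ) / 2) * a ^ (((p : ℝ) - 1) / 2) ≤ p * √a ^ p / √a := by
    rw [hrpow, mul_div_assoc]
    refine mul_le_mul_of_nonneg_right ?_ (by positivity)
    refine sqrt_le_iff.2 ⟨p.cast_nonneg, ?_⟩
    rcases p.eq_zero_or_pos with rfl | hp
    · simp
    · nlinarith [(Nat.one_le_cast.2 hp : (1 : ℝ) ≤ p)]
  refine squeeze_zero (fun p => by positivity) hle ?_
  simpa using (tendsto_self_mul_const_pow_of_lt_one (sqrt_nonneg a)
    (by simpa using sqrt_lt_sqrt ha0.le ha1)).div_const √a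

noncomputable def gaussianTanhSqMean (s h : ℝ) : ℝ :=
  ∫ y, tanh (s * y + h) ^ 2 ∂gaussianReal 0 1

theorem continuous_gaussianTanhSqMean (h : ℝ) : Continuous fun s => gaussianTanhSqMean s h :=
  continuous_of_dominated (bound := fun _ => 1)
    (fun _ => (by fun_prop : Continuous fun y => tanh (_ * y + h) ^ 2).aestronglyMeasurable)
    (fun _ => ae_of_all _ fun _ => norm_tanh_sq_le_one _) (integrable_const 1)
    (ae_of_all _ fun _ => by fun_prop)

theorem abs_gaussianTanhSqMean_sub_le (s h : ℝ) :
    |gaussianTanhSqMean s h - tanh h ^ 2| ≤ 2 * |s| * ∫ y, |y| ∂gaussianReal 0 1 := by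
  have hint : Integrable (fun y => tanh (s * y + h) ^ 2) (gaussianReal 0 1) :=
    (integrable_const 1).mono'
      (by fun_prop : Continuous fun y => tanh (s * y + h) ^ 2).aestronglyMeasurable
      (ae_of_all _ fun _ => norm_tanh_sq_le_one _)
  calc |gaussianTanhSqMean s h - tanh h ^ 2|
      = |∫ y, (tanh (s * y + h) ^ 2 - tanh h ^ 2) ∂gaussianReal 0 1| := by
        rw [integral_sub hint (integrable_const _), integral_const, probReal_univ, one_smul,
          gaussianTanhSqMean]
    _ ≤ ∫ y, |tanh (s * y + h) ^ 2 - tanh h ^ 2| ∂gaussianReal 0 1 :=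
        abs_integral_le_integral_abs
    _ ≤ ∫ y, 2 * |s| * |y| ∂gaussianReal 0 1 := by
        refine integral_mono (hint.sub (integrable_const _)).abs
          ((integrable_abs_gaussianReal 0 1).const_mul _) fun y => ?_
        simpa [abs_mul, mul_assoc] using abs_tanh_sq_sub_tanh_sq_le (s * y + h) h
    _ = 2 * |s| * ∫ y, |y| ∂gaussianReal 0 1 := integral_const_mul _ _

theorem abs_gaussianTanhSqMean_rpow_sub_le (c h : ℝ) {e x a : ℝ} (he : 0 ≤ e)
    (hx : x ∈ Icc 0 a) :
    |gaussianTanhSqMean (c * x ^ e) h - tanh h ^ 2|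
      ≤ 2 * |c| * a ^ e * ∫ y, |y| ∂gaussianReal 0 1 := by
  refine (abs_gaussianTanhSqMean_sub_le _ h).trans ?_
  rw [abs_mul, abs_of_nonneg (rpow_nonneg hx.1 e), ← mul_assoc]
  have hM : 0 ≤ ∫ y, |y| ∂gaussianReal 0 1 := integral_nonneg fun y => abs_nonneg y
  gcongr
  exacts [hx.1, hx.2]

theorem exists_gaussianTanhSqMean_rpow_eq_self_le (c h : ℝ) {e a : ℝ} (he : 0 < e)
    (ha : 0 ≤ a) (hbound : 2 * |c| * a ^ e * ∫ y, |y| ∂gaussianReal 0 1 ≤ a - tanh h ^ 2) :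
    ∃ x ∈ Icc 0 a, gaussianTanhSqMean (c * x ^ e) h = x := by
  refine exists_fixedPoint_mem_Icc ha ?_ ?_ ?_
  · exact ((continuous_gaussianTanhSqMean h).comp
      (continuous_const.mul (continuous_rpow_const he.le))).continuousOn
  · exact integral_nonneg fun y => sq_nonneg _
  · linarith [(abs_le.1 (abs_gaussianTanhSqMean_rpow_sub_le c h he.le ⟨ha, le_rfl⟩)).2]

theorem stmt_7_general (β h : ℝ) (q : ℕ → ℝ)
    (hq : ∀ p : ℕ, 2 ≤ p → q p ∈ Set.Icc (0 : ℝ) 1 ∧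
      q p = ∫ y, Real.tanh (β * Real.sqrt ((p : ℝ) / 2) * (q p) ^ (((p : ℝ) - 1) / 2) * y + h) ^ 2
              ∂(gaussianReal 0 1))
    (huniq : ∀ p : ℕ, 2 ≤ p → ∀ q' ∈ Set.Icc (0 : ℝ) 1,
      q' = (∫ y, Real.tanh (β * Real.sqrt ((p : ℝ) / 2) * q' ^ (((p : ℝ) - 1) / 2) * y + h) ^ 2
              ∂(gaussianReal 0 1)) → q' = q p) :
    Filter.Tendsto q Filter.atTop (nhds (Real.tanh h ^ 2)) := by
  set t := tanh h ^ 2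
  set M := ∫ y, |y| ∂gaussianReal 0 1
  have ht : 0 ≤ t := sq_nonneg _
  obtain ⟨a, hta, ha1⟩ := exists_between (tanh_sq_lt_one h)
  have hbound : Tendsto (fun p : ℕ => 2 * |β| * M * (√((p : ℝ) / 2) * a ^ (((p : ℝ) - 1) / 2)))
      atTop (𝓝 0) := by
    simpa using (tendsto_sqrt_mul_rpow_atTop (a := a) (by linarith) ha1).const_mul
      (2 * |β| * M)
  have hclose : ∀ᶠ p : ℕ in atTop,
      dist (q p) t ≤ 2 * |β| * M * (√((p : ℝ) / 2) * a ^ (((p : ℝ) - 1) / 2)) := by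
    filter_upwards [eventually_ge_atTop 2,
      hbound.eventually_le_const (show (0 : ℝ) < a - t by linarith)] with p hp hpa
    have he : 0 < ((p : ℝ) - 1) / 2 := by
      have : (2 : ℝ) ≤ p := by exact_mod_cast hp
      linarith
    have hcoef : 2 * |β * √((p : ℝ) / 2)| * a ^ (((p : ℝ) - 1) / 2) * M
        = 2 * |β| * M * (√((p : ℝ) / 2) * a ^ (((p : ℝ) - 1) / 2)) := by
      rw [abs_mul, abs_of_nonneg (sqrt_nonneg _)]; ring
    obtain ⟨x, hx, hfix⟩ := exists_gaussianTanhSqMean_rpow_eq_self_le (β * √((p : ℝ) / 2)) h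
      he (by linarith) (hcoef.trans_le hpa)
    have hqa : q p ∈ Icc 0 a := huniq p hp x ⟨hx.1, hx.2.trans ha1.le⟩ hfix.symm ▸ hx
    rw [dist_eq, ← hcoef, (hq p hp).2]
    exact abs_gaussianTanhSqMean_rpow_sub_le _ h he.le hqa
  exact tendsto_iff_dist_tendsto_zero.2
    (squeeze_zero' (Eventually.of_forall fun _ => dist_nonneg) hclose hbound)

theorem stmt_7 (β h : ℝ) (hβ : 0 < β) (hh : 0 < h) (q : ℕ → ℝ)
    (hq : ∀ p : ℕ, 2 ≤ p → q p ∈ Set.Icc (0 : ℝ) 1 ∧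
      q p = ∫ y, Real.tanh (β * Real.sqrt ((p : ℝ) / 2) * (q p) ^ (((p : ℝ) - 1) / 2) * y + h) ^ 2
              ∂(gaussianReal 0 1))
    (huniq : ∀ p : ℕ, 2 ≤ p → ∀ q' ∈ Set.Icc (0 : ℝ) 1,
      q' = (∫ y, Real.tanh (β * Real.sqrt ((p : ℝ) / 2) * q' ^ (((p : ℝ) - 1) / 2) * y + h) ^ 2
              ∂(gaussianReal 0 1)) → q' = q p) :
    Filter.Tendsto q Filter.atTop (nhds (Real.tanh h ^ 2)) :=
  stmt_7_general β h q hq huniq
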